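/- arXiv:0811.4366 — 2 statements merged into one kernel-verified Lean document; each statement's English description precedes it below -/
import Mathlib

section
/- Let f : Ω → Y be a C^k function on an open set Ω ⊆ X containing the parallelepiped {x + t·u : t ∈ [0,1]^k}, where u = (u₁,…,u_k) ∈ X^k. Then Δ^k_u f(x) = ∫_{[0,1]^k} D^k f(x + t·u)(u₁,…,u_k) dt, where D^k f denotes the k-th Fréchet derivative. -/
/-!
Induction on `k`. Writing `u = (u₀, u')`, one has `Δ^{k+1}_u f (x) = Δ^k_{u'} g (x)` with
`g = f (· + u₀) - f`, so by induction it is the integral over `[0,1]^k` of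
`D^k g (x + t·u') u' = D^k f (x + t·u' + u₀) u' - D^k f (x + t·u') u'`. The fundamental theorem of
calculus along the segment `s ↦ x + t·u' + s u₀` writes this difference as
`∫₀¹ D^{k+1} f (x + t·u' + s u₀) u ds`, and Fubini merges the two integrals into one over
`[0,1]^{k+1}`.
-/

open Finset

/-- The finite difference of order `k`:
`Δ^k_u f (x) = ∑_{α ∈ {0,1}^k} (-1)^{k-|α|} f (x + α·u)`. -/
def fdiff {X Y : Type*} [AddCommGroup X] [AddCommGroup Y] {k : ℕ}
    (u : Fin k → X) (f : X → Y) (x : X) : Y :=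
  ∑ α : Fin k → Bool,
    ((-1 : ℤ) ^ (k - (Finset.univ.filter fun i => α i).card)) •
      f (x + ∑ i, if α i then u i else 0)

open MeasureTheory

section FiniteDifference

variable {X Y : Type*} [AddCommGroup X] [AddCommGroup Y]

theorem fdiff_eq_sum_prod {k : ℕ} (u : Fin k → X) (f : X → Y) (x : X) :
    fdiff u f x = ∑ α : Fin k → Bool,
      (∏ i, if α i then (1 : ℤ) else -1) • f (x + ∑ i, if α i then u i else 0) := by
  have hsign : ∀ α : Fin k → Bool,
      (-1 : ℤ) ^ (k - #{i | α i}) = ∏ i, if α i then 1 else -1 := fun α => by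
    rw [prod_ite, prod_const_one, prod_const, one_mul]
    have hcard := card_filter_add_card_filter_not (s := univ) (fun i => α i = true)
    rw [card_univ, Fintype.card_fin] at hcard
    congr 1
    omega
  simp only [fdiff, hsign]

theorem fdiff_zero (u : Fin 0 → X) (f : X → Y) (x : X) : fdiff u f x = f x := by
  simp [fdiff]

theorem fdiff_succ {k : ℕ} (u : Fin (k + 1) → X) (f : X → Y) (x : X) :
    fdiff u f x = fdiff (Fin.tail u) (fun y => f (y + u 0) - f y) x := by
  rw [fdiff_eq_sum_prod, fdiff_eq_sum_prod, ← (Fin.consEquiv fun _ => Bool).sum_comp,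
    Fintype.sum_prod_type, Fintype.sum_bool, ← sum_add_distrib]
  refine sum_congr rfl fun β _ => ?_
  simp [Fin.prod_univ_succ, Fin.sum_univ_succ, Fin.tail, sub_eq_add_neg, add_assoc,
    add_comm (u 0)]

end FiniteDifference

theorem Fin.cons_mem_Icc_iff {α : Type*} [Preorder α] {n : ℕ} {a b : Fin (n + 1) → α} {s : α}
    {t : Fin n → α} :
    (Fin.cons s t : Fin (n + 1) → α) ∈ Set.Icc a b ↔
      s ∈ Set.Icc (a 0) (b 0) ∧ t ∈ Set.Icc (Fin.tail a) (Fin.tail b) := by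
  simp only [Set.mem_Icc, Fin.le_cons, Fin.cons_le]
  tauto

theorem Fin.sum_cons_smul {R M : Type*} [Semiring R] [AddCommMonoid M] [Module R M] {n : ℕ}
    (s : R) (t : Fin n → R) (u : Fin (n + 1) → M) :
    ∑ i, (Fin.cons s t : Fin (n + 1) → R) i • u i = s • u 0 + ∑ i, t i • Fin.tail u i := by
  simp [Fin.sum_univ_succ, Fin.tail]

theorem setIntegral_Icc_fin_succ {F : Type*} [NormedAddCommGroup F] [NormedSpace ℝ F] {n : ℕ}
    {a b : Fin (n + 1) → ℝ} {g : (Fin (n + 1) → ℝ) → F} (hg : IntegrableOn g (Set.Icc a b)) :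
    ∫ τ in Set.Icc a b, g τ =
      ∫ t in Set.Icc (Fin.tail a) (Fin.tail b), ∫ s in Set.Icc (a 0) (b 0), g (Fin.cons s t) := by
  set e := (MeasurableEquiv.piFinSuccAbove (fun _ : Fin (n + 1) => ℝ) 0).symm
  have he : MeasurePreserving e := (volume_preserving_piFinSuccAbove _ 0).symm
  have hcons : ∀ p, e p = Fin.cons p.1 p.2 := fun p => by
    simp [e, MeasurableEquiv.piFinSuccAbove, Fin.insertNthEquiv, Fin.insertNth_zero']
  have hpre : e ⁻¹' Set.Icc a b = Set.Icc (a 0) (b 0) ×ˢ Set.Icc (Fin.tail a) (Fin.tail b) := by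
    ext p
    simp only [Set.mem_preimage, hcons, Fin.cons_mem_Icc_iff, Set.mem_prod]
  have hint : IntegrableOn (g ∘ e) (Set.Icc (a 0) (b 0) ×ˢ Set.Icc (Fin.tail a) (Fin.tail b)) := by
    rwa [← hpre, he.integrableOn_comp_preimage e.measurableEmbedding]
  rw [← he.setIntegral_preimage_emb e.measurableEmbedding, hpre, Measure.volume_eq_prod,
    ← Measure.prod_restrict, integral_prod_symm _ (by rwa [Measure.prod_restrict])]
  simp only [hcons]

section IteratedDerivative

variable {𝕜 E F : Type*} [NontriviallyNormedField 𝕜] [NormedAddCommGroup E] [NormedSpace 𝕜 E]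
  [NormedAddCommGroup F] [NormedSpace 𝕜 F]

theorem ContDiffAt.comp_add_right {n : WithTop ℕ∞} {f : E → F} {z v : E}
    (hf : ContDiffAt 𝕜 n f (z + v)) : ContDiffAt 𝕜 n (fun y => f (y + v)) z :=
  hf.comp z (contDiffAt_id.add contDiffAt_const)

theorem iteratedFDeriv_comp_add_right_sub {n : ℕ} {f : E → F} {z v : E}
    (h₀ : ContDiffAt 𝕜 n f z) (h₁ : ContDiffAt 𝕜 n f (z + v)) :
    iteratedFDeriv 𝕜 n (fun y => f (y + v) - f y) z =
      iteratedFDeriv 𝕜 n f (z + v) - iteratedFDeriv 𝕜 n f z := by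
  rw [← iteratedFDeriv_comp_add_right]
  exact iteratedFDeriv_sub_apply h₁.comp_add_right h₀

theorem continuousOn_iteratedFDeriv_comp_apply {α : Type*} [TopologicalSpace α] {n : ℕ}
    {f : E → F} {γ : α → E} {s : Set α} (hγ : Continuous γ)
    (hf : ∀ t ∈ s, ContDiffAt 𝕜 n f (γ t)) (w : Fin n → E) :
    ContinuousOn (fun t => iteratedFDeriv 𝕜 n f (γ t) w) s := fun t ht =>
  ((continuous_eval_const w).continuousAt.comp
    (((hf t ht).continuousAt_iteratedFDeriv le_rfl).comp hγ.continuousAt)).continuousWithinAt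

end IteratedDerivative

section Integral

variable {E F : Type*} [NormedAddCommGroup E] [NormedSpace ℝ E] [NormedAddCommGroup F]
  [NormedSpace ℝ F] [CompleteSpace F]

theorem iteratedFDeriv_add_sub_eq_integral {n : ℕ} {f : E → F} {z v : E}
    (hf : ∀ s ∈ Set.Icc (0 : ℝ) 1, ContDiffAt ℝ (n + 1 : ℕ) f (z + s • v)) (w : Fin n → E) :
    iteratedFDeriv ℝ n f (z + v) w - iteratedFDeriv ℝ n f z w =
      ∫ s in Set.Icc (0 : ℝ) 1, iteratedFDeriv ℝ (n + 1) f (z + s • v) (Fin.cons v w) := by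
  have hline : Continuous fun s : ℝ => z + s • v := by fun_prop
  have hderiv : ∀ s ∈ Set.uIcc (0 : ℝ) 1,
      HasDerivAt (fun s : ℝ => iteratedFDeriv ℝ n f (z + s • v) w)
        (iteratedFDeriv ℝ (n + 1) f (z + s • v) (Fin.cons v w)) s := by
    intro s hs
    rw [Set.uIcc_of_le zero_le_one] at hs
    have hlineDeriv : HasDerivAt (fun s : ℝ => z + s • v) v s := by
      simpa using ((hasDerivAt_id s).smul_const v).const_add z
    have hD := ((hf s hs).differentiableAt_iteratedFDeriv (m := n) (by norm_cast; omega))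
      |>.hasFDerivAt.comp_hasDerivAt s hlineDeriv
    simpa [iteratedFDeriv_succ_apply_left, Function.comp_def] using
      (ContinuousMultilinearMap.apply ℝ (fun _ : Fin n => E) F w).hasFDerivAt.comp_hasDerivAt s hD
  have hcont := continuousOn_iteratedFDeriv_comp_apply hline hf (Fin.cons v w)
  rw [integral_Icc_eq_integral_Ioc, ← intervalIntegral.integral_of_le zero_le_one,
    intervalIntegral.integral_eq_sub_of_hasDerivAt hderiv
    (hcont.intervalIntegrable_of_Icc zero_le_one)]
  simp

theorem fdiff_eq_integral_iteratedFDeriv_of_contDiffAt {k : ℕ} {f : E → F} {x : E}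
    {u : Fin k → E}
    (hf : ∀ t ∈ Set.Icc (0 : Fin k → ℝ) 1, ContDiffAt ℝ k f (x + ∑ i, t i • u i)) :
    fdiff u f x =
      ∫ t in Set.Icc (0 : Fin k → ℝ) 1, iteratedFDeriv ℝ k f (x + ∑ i, t i • u i) u := by
  induction k generalizing f x with
  | zero => simp [fdiff_zero, measureReal_def, Real.volume_Icc_pi]
  | succ k ih =>
    have hpt : ∀ s t, x + ∑ i, (Fin.cons s t : Fin (k + 1) → ℝ) i • u i =
        x + ∑ i, t i • Fin.tail u i + s • u 0 := fun s t => by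
      rw [Fin.sum_cons_smul]; abel
    have hseg : ∀ t ∈ Set.Icc (0 : Fin k → ℝ) 1, ∀ s ∈ Set.Icc (0 : ℝ) 1,
        ContDiffAt ℝ (k + 1 : ℕ) f (x + ∑ i, t i • Fin.tail u i + s • u 0) := fun t ht s hs => by
      simpa only [hpt] using hf (Fin.cons s t) (Fin.cons_mem_Icc_iff.2 ⟨hs, ht⟩)
    have hends : ∀ t ∈ Set.Icc (0 : Fin k → ℝ) 1,
        ContDiffAt ℝ k f (x + ∑ i, t i • Fin.tail u i) ∧
        ContDiffAt ℝ k f (x + ∑ i, t i • Fin.tail u i + u 0) := fun t ht =>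
      ⟨by simpa using (hseg t ht 0 (by simp)).of_le (by exact_mod_cast k.le_succ),
        by simpa using (hseg t ht 1 (by simp)).of_le (by exact_mod_cast k.le_succ)⟩
    have hint : IntegrableOn (fun τ : Fin (k + 1) → ℝ => iteratedFDeriv ℝ (k + 1) f
        (x + ∑ i, τ i • u i) u) (Set.Icc 0 1) := by
      refine ContinuousOn.integrableOn_compact isCompact_Icc
        (continuousOn_iteratedFDeriv_comp_apply ?_ hf u)
      exact continuous_const.add
        (continuous_finsetSum _ fun i _ => (continuous_apply i).smul continuous_const)
    calc fdiff u f x = fdiff (Fin.tail u) (fun y => f (y + u 0) - f y) x := fdiff_succ u f x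
      _ = ∫ t in Set.Icc (0 : Fin k → ℝ) 1,
            iteratedFDeriv ℝ k (fun y => f (y + u 0) - f y) (x + ∑ i, t i • Fin.tail u i)
              (Fin.tail u) :=
        ih fun t ht => (hends t ht).2.comp_add_right.sub (hends t ht).1
      _ = ∫ t in Set.Icc (0 : Fin k → ℝ) 1, ∫ s in Set.Icc (0 : ℝ) 1,
            iteratedFDeriv ℝ (k + 1) f (x + ∑ i, t i • Fin.tail u i + s • u 0) u := by
        refine setIntegral_congr_fun measurableSet_Icc fun t ht => ?_
        rw [iteratedFDeriv_comp_add_right_sub (hends t ht).1 (hends t ht).2, sub_apply,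
          iteratedFDeriv_add_sub_eq_integral (hseg t ht), Fin.cons_self_tail]
      _ = ∫ τ in Set.Icc (0 : Fin (k + 1) → ℝ) 1,
            iteratedFDeriv ℝ (k + 1) f (x + ∑ i, τ i • u i) u := by
        rw [setIntegral_Icc_fin_succ hint]
        simp only [hpt]
        -- the bounds `Fin.tail 0`, `(0 : Fin (k + 1) → ℝ) 0`, ... reduce to `0` and `1`
        rfl

end Integral

theorem fdiff_eq_integral_iteratedFDeriv {d : ℕ}
    {Y : Type*} [NormedAddCommGroup Y] [NormedSpace ℝ Y] [CompleteSpace Y]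
    {k : ℕ} (Ω : Set (EuclideanSpace ℝ (Fin d))) (hΩ : IsOpen Ω)
    (f : EuclideanSpace ℝ (Fin d) → Y) (hf : ContDiffOn ℝ k f Ω)
    (x : EuclideanSpace ℝ (Fin d)) (u : Fin k → EuclideanSpace ℝ (Fin d))
    (hpar : ∀ t ∈ Set.Icc (0 : Fin k → ℝ) 1, x + ∑ i, t i • u i ∈ Ω) :
    fdiff u f x =
      ∫ t in Set.Icc (0 : Fin k → ℝ) 1,
        iteratedFDeriv ℝ k f (x + ∑ i, t i • u i) u :=
  fdiff_eq_integral_iteratedFDeriv_of_contDiffAt fun t ht =>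
    hf.contDiffAt (hΩ.mem_nhds (hpar t ht))
end

section
/- Let Ω ⊆ X be open convex and f : Ω → Y continuous with ‖Δ^{k+1} f‖_Ω ≤ C (i.e., ‖Δ^{k+1}_v f(x)‖ ≤ C‖v₁‖⋯‖v_{k+1}‖ whenever defined). Then for every n ∈ ℕ^k with positive entries, every u ∈ X^k and x such that all relevant points lie in Ω: ‖Δ^k_u f(x) − n̄ · Δ^k_{u/n} f(x)‖ ≤ (k/2) · C · (max_i ‖u_i‖) · ‖u₁‖⋯‖u_k‖, where n̄ = n₁⋯n_k and u/n = (u₁/n₁,…,u_k/n_k). -/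
open Finset

set_option linter.unusedSectionVars false

section Aux

variable {X Y : Type*} [NormedAddCommGroup X] [NormedSpace ℝ X]
  [NormedAddCommGroup Y] [NormedSpace ℝ Y]

lemma fdiff_comp_add {k : ℕ} (u : Fin k → X) (f : X → Y) (x v : X) :
    fdiff u (fun y => f (y + v)) x = fdiff u f (x + v) := by
  unfold fdiff
  refine Finset.sum_congr rfl fun α _ => ?_
  rw [add_right_comm]

lemma card_filter_cons {k : ℕ} (b : Bool) (β : Fin k → Bool) :
    (Finset.univ.filter fun i => ((Fin.cons b β : Fin (k+1) → Bool) i : Bool)).card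
      = (if b then 1 else 0) + (Finset.univ.filter fun i => β i).card := by
  rw [Finset.card_filter, Finset.card_filter, Fin.sum_univ_succ]
  simp

lemma fdiff_cons {k : ℕ} (v : X) (u : Fin k → X) (f : X → Y) (x : X) :
    fdiff (Fin.cons v u) f x = fdiff u f (x + v) - fdiff u f x := by
  unfold fdiff
  rw [← (Fin.consEquiv (fun _ : Fin (k+1) => Bool)).sum_comp, Fintype.sum_prod_type,
    Fintype.sum_bool]
  have hpt : ∀ (b : Bool) (β : Fin k → Bool),
      (x + ∑ i, if (Fin.consEquiv (fun _ : Fin (k+1) => Bool)) (b, β) i then Fin.cons v u i else 0)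
        = x + (if b then v else 0) + ∑ i, if β i then u i else 0 := by
    intro b β
    rw [show ((Fin.consEquiv (fun _ : Fin (k+1) => Bool)) (b, β)) = Fin.cons b β from rfl,
      Fin.sum_univ_succ]
    simp [add_assoc]
  have hcard : ∀ (b : Bool) (β : Fin k → Bool),
      (Finset.univ.filter fun i => ((Fin.consEquiv (fun _ : Fin (k+1) => Bool)) (b, β) i : Bool)).card
        = (if b then 1 else 0) + (Finset.univ.filter fun i => β i).card := by
    intro b β
    rw [show ((Fin.consEquiv (fun _ : Fin (k+1) => Bool)) (b, β)) = Fin.cons b β from rfl]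
    exact card_filter_cons b β
  have hle : ∀ β : Fin k → Bool, (Finset.univ.filter fun i => β i).card ≤ k := by
    intro β
    simpa using Finset.card_filter_le Finset.univ (fun i => β i = true)
  rw [sub_eq_add_neg, ← Finset.sum_neg_distrib]
  congr 1
  · refine Finset.sum_congr rfl fun β _ => ?_
    rw [hpt, hcard]
    have : k + 1 - (1 + (Finset.univ.filter fun i => β i).card)
        = k - (Finset.univ.filter fun i => β i).card := by omega
    simp only [if_true, this]
  · refine Finset.sum_congr rfl fun β _ => ?_
    rw [hpt, hcard]
    have h1 : k + 1 - (Finset.univ.filter fun i => β i).card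
        = (k - (Finset.univ.filter fun i => β i).card) + 1 := by
      have := hle β; omega
    simp [h1, pow_succ, mul_smul]


lemma fdiff_shift_sub {k : ℕ} (u : Fin k → X) (f : X → Y) (v x : X) :
    fdiff u (fun y => f (y + v) - f y) x = fdiff (Fin.cons v u) f x := by
  rw [fdiff_cons, ← fdiff_comp_add]
  unfold fdiff
  rw [← Finset.sum_sub_distrib]
  refine Finset.sum_congr rfl fun α _ => ?_
  rw [smul_sub]

lemma fdiff_cons_nsmul {k : ℕ} (v : X) (u : Fin k → X) (f : X → Y) (x : X) (n : ℕ) :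
    fdiff (Fin.cons ((n : ℝ) • v) u) f x - (n : ℝ) • fdiff (Fin.cons v u) f x
      = ∑ m ∈ Finset.range n, fdiff (Fin.cons ((m : ℝ) • v) (Fin.cons v u)) f x := by
  have hterm : ∀ m : ℕ, fdiff (Fin.cons ((m : ℝ) • v) (Fin.cons v u)) f x
      = (fdiff u f (x + ((m+1 : ℕ) : ℝ) • v) - fdiff u f (x + (m : ℝ) • v))
        - (fdiff u f (x + v) - fdiff u f x) := by
    intro m
    rw [fdiff_cons, fdiff_cons, fdiff_cons]
    have : x + (m : ℝ) • v + v = x + ((m + 1 : ℕ) : ℝ) • v := by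
      push_cast
      rw [add_smul, one_smul, add_assoc]
    rw [this]
  calc fdiff (Fin.cons ((n : ℝ) • v) u) f x - (n : ℝ) • fdiff (Fin.cons v u) f x
      = (fdiff u f (x + (n : ℝ) • v) - fdiff u f x)
          - n • (fdiff u f (x + v) - fdiff u f x) := by
        rw [fdiff_cons, fdiff_cons, ← Nat.cast_smul_eq_nsmul ℝ n]
    _ = ∑ m ∈ Finset.range n, fdiff (Fin.cons ((m : ℝ) • v) (Fin.cons v u)) f x := by
        rw [Finset.sum_congr rfl fun m _ => hterm m, Finset.sum_sub_distrib,
          Finset.sum_range_sub (fun m : ℕ => fdiff u f (x + (m : ℝ) • v)),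
          Finset.sum_const, Finset.card_range]
        simp only [Nat.cast_zero, zero_smul, add_zero]

lemma fdiff_zero_coord : ∀ {k : ℕ} (u : Fin k → X) (i : Fin k), u i = 0 →
    ∀ (f : X → Y) (x : X), fdiff u f x = 0 := by
  intro k
  induction k with
  | zero => exact fun u i => absurd i.2 (by omega)
  | succ k ih =>
    intro u i hi f x
    rw [← Fin.cons_self_tail u, fdiff_cons]
    rcases Fin.eq_zero_or_eq_succ i with h0 | ⟨j, hj⟩
    · rw [h0] at hi
      rw [hi, add_zero, sub_self]
    · have : Fin.tail u j = 0 := by rw [Fin.tail]; rw [hj] at hi; exact hi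
      rw [ih (Fin.tail u) j this, ih (Fin.tail u) j this, sub_self]


lemma fdiff_aux : ∀ (k : ℕ) (Ω : Set X) (f : X → Y) (C : ℝ), 0 ≤ C →
    (∀ (v : Fin (k + 1) → X) (y : X),
      (∀ α : Fin (k + 1) → Bool, y + ∑ i, (if α i then v i else 0) ∈ Ω) →
      ‖fdiff v f y‖ ≤ C * ∏ i, ‖v i‖) →
    ∀ (n : Fin k → ℕ), (∀ i, 0 < n i) → ∀ (u : Fin k → X) (x : X),
    (∀ t ∈ Set.Icc (0 : Fin k → ℝ) 1, x + ∑ i, t i • u i ∈ Ω) →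
    ‖fdiff u f x - (∏ i, (n i : ℝ)) • fdiff (fun i => ((n i : ℝ))⁻¹ • u i) f x‖ ≤
      (k / 2 : ℝ) * C * (⨆ i, ‖u i‖) * ∏ i, ‖u i‖ := by
  intro k
  induction k with
  | zero =>
    intro Ω f C hC0 hC n hn u x hpar
    simp [fdiff]
  | succ k ih =>
    intro Ω f C hC0 hC n hn u x hpar
    have hn0 : (0:ℝ) < (n 0 : ℝ) := by exact_mod_cast hn 0
    have hn0' : ((n 0 : ℝ)) ≠ 0 := ne_of_gt hn0
    set v0 : X := ((n 0 : ℝ))⁻¹ • u 0 with hv0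
    have hu0 : ((n 0 : ℝ)) • v0 = u 0 := smul_inv_smul₀ hn0' _
    have hbdd : BddAbove (Set.range fun i : Fin (k+1) => ‖u i‖) :=
      Set.Finite.bddAbove (Set.finite_range _)
    set S := ⨆ i : Fin (k+1), ‖u i‖ with hS
    have hSle : ∀ i, ‖u i‖ ≤ S := fun i => le_ciSup hbdd i
    have hS0 : 0 ≤ S := le_trans (norm_nonneg _) (hSle 0)
    have hP0 : (0:ℝ) ≤ ∏ i, ‖Fin.tail u i‖ := Finset.prod_nonneg fun i _ => norm_nonneg _
    have hprod : ∏ i : Fin (k+1), ‖u i‖ = ‖u 0‖ * ∏ i : Fin k, ‖Fin.tail u i‖ := by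
      rw [Fin.prod_univ_succ]; rfl
    have hv0norm : ‖v0‖ = (n 0 : ℝ)⁻¹ * ‖u 0‖ := by
      rw [hv0, norm_smul, Real.norm_eq_abs, abs_of_nonneg (by positivity)]
    have h1 : (n 0 : ℝ) * ‖v0‖ = ‖u 0‖ := by
      rw [hv0norm]; field_simp
    -- membership for the step-1 applications of hC
    have hmem1 : ∀ m : ℕ, m < n 0 → ∀ α : Fin (k+1+1) → Bool,
        x + ∑ i, (if α i then (Fin.cons ((m:ℝ) • v0) (Fin.cons v0 (Fin.tail u)) :
          Fin (k+1+1) → X) i else 0) ∈ Ω := by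
      intro m hm α
      set a : ℝ := if α 0 then (m:ℝ) else 0 with ha
      set b : ℝ := if α 1 then (1:ℝ) else 0 with hb
      have ha0 : 0 ≤ a := by rw [ha]; split <;> positivity
      have ham : a ≤ (m:ℝ) := by
        rw [ha]; split
        · exact le_rfl
        · positivity
      have hb0 : 0 ≤ b := by rw [hb]; split <;> norm_num
      have hb1 : b ≤ 1 := by rw [hb]; split <;> norm_num
      have habn : a + b ≤ (n 0 : ℝ) := by
        have : (m:ℝ) + 1 ≤ (n 0 : ℝ) := by exact_mod_cast hm
        linarith
      set t : Fin (k+1) → ℝ :=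
        Fin.cons ((a + b) / (n 0 : ℝ)) (fun i => if α i.succ.succ then 1 else 0) with htdef
      have ht : t ∈ Set.Icc (0 : Fin (k+1) → ℝ) 1 := by
        constructor
        · intro i
          refine Fin.cases ?_ (fun j => ?_) i
          · show (0:ℝ) ≤ t 0
            rw [htdef, Fin.cons_zero]
            positivity
          · show (0:ℝ) ≤ t j.succ
            rw [htdef, Fin.cons_succ]
            split <;> norm_num
        · intro i
          refine Fin.cases ?_ (fun j => ?_) i
          · show t 0 ≤ (1:ℝ)
            rw [htdef, Fin.cons_zero, div_le_one hn0]
            linarith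
          · show t j.succ ≤ (1:ℝ)
            rw [htdef, Fin.cons_succ]
            split <;> norm_num
      have hsum : (∑ i : Fin (k+1+1), if α i then (Fin.cons ((m:ℝ) • v0)
            (Fin.cons v0 (Fin.tail u)) : Fin (k+1+1) → X) i else 0)
          = ∑ i : Fin (k+1), t i • u i := by
        rw [Fin.sum_univ_succ, Fin.sum_univ_succ,
          Fin.sum_univ_succ (f := fun i : Fin (k+1) => t i • u i)]
        simp only [Fin.cons_zero, Fin.cons_succ]
        have hterm : ∀ i : Fin k, t i.succ • u i.succ
            = (if α i.succ.succ then Fin.tail u i else 0) := by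
          intro i
          rw [htdef, Fin.cons_succ]
          split <;> simp [Fin.tail]
        rw [Finset.sum_congr rfl fun i _ => hterm i]
        have hhead : (if α 0 then (m:ℝ) • v0 else 0) + (if α 1 then v0 else 0)
            = t 0 • u 0 := by
          rw [htdef, Fin.cons_zero]
          have e1 : (if α 0 then (m:ℝ) • v0 else 0) = a • v0 := by
            rw [ha]; split <;> simp
          have e2 : (if α 1 then v0 else 0) = b • v0 := by
            rw [hb]; split <;> simp
          rw [e1, e2, ← add_smul, hv0, smul_smul, div_eq_mul_inv]
        rw [← hhead, ← add_assoc, Fin.succ_zero_eq_one]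
      rw [hsum]
      exact hpar t ht
    -- step 1 : refining the first coordinate
    have key1 : ‖fdiff u f x - (n 0 : ℝ) • fdiff (Fin.cons v0 (Fin.tail u)) f x‖
        ≤ 1/2 * C * S * ∏ i : Fin (k+1), ‖u i‖ := by
      have e1 : fdiff u f x = fdiff (Fin.cons ((n 0 : ℝ) • v0) (Fin.tail u)) f x := by
        rw [hu0, Fin.cons_self_tail]
      rw [e1, fdiff_cons_nsmul]
      refine le_trans (norm_sum_le _ _) ?_
      have hbound : ∀ m ∈ Finset.range (n 0),
          ‖fdiff (Fin.cons ((m:ℝ) • v0) (Fin.cons v0 (Fin.tail u))) f x‖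
          ≤ (m : ℝ) * (C * ‖v0‖^2 * ∏ i, ‖Fin.tail u i‖) := by
        intro m hm
        refine le_trans (hC _ x (hmem1 m (Finset.mem_range.mp hm))) ?_
        rw [Fin.prod_univ_succ, Fin.prod_univ_succ]
        simp only [Fin.cons_zero, Fin.cons_succ]
        rw [norm_smul, Real.norm_eq_abs, abs_of_nonneg (Nat.cast_nonneg m)]
        exact le_of_eq (by ring)
      refine le_trans (Finset.sum_le_sum hbound) ?_
      rw [← Finset.sum_mul]
      have hsum_id : (∑ m ∈ Finset.range (n 0), (m:ℝ)) * 2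
          = ((n 0 * (n 0 - 1) : ℕ) : ℝ) := by
        rw [show ((2:ℝ) = ((2:ℕ):ℝ)) from by norm_num, ← Nat.cast_sum, ← Nat.cast_mul,
          Finset.sum_range_id_mul_two]
      have hnn : ((n 0 * (n 0 - 1) : ℕ) : ℝ) ≤ (n 0 : ℝ)^2 := by
        have h2 : n 0 * (n 0 - 1) ≤ n 0 * n 0 := Nat.mul_le_mul_left _ (Nat.sub_le _ _)
        calc ((n 0 * (n 0 - 1) : ℕ) : ℝ) ≤ ((n 0 * n 0 : ℕ) : ℝ) := by exact_mod_cast h2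
          _ = (n 0 : ℝ)^2 := by push_cast; ring
      have hgauss : ∑ m ∈ Finset.range (n 0), (m:ℝ) ≤ (n 0 : ℝ)^2 / 2 := by linarith
      calc (∑ m ∈ Finset.range (n 0), (m:ℝ)) * (C * ‖v0‖^2 * ∏ i, ‖Fin.tail u i‖)
          ≤ ((n 0 : ℝ)^2 / 2) * (C * ‖v0‖^2 * ∏ i, ‖Fin.tail u i‖) :=
            mul_le_mul_of_nonneg_right hgauss (by positivity)
        _ = 1/2 * C * ‖u 0‖ * (‖u 0‖ * ∏ i, ‖Fin.tail u i‖) := by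
            rw [← h1]; ring
        _ ≤ 1/2 * C * S * (‖u 0‖ * ∏ i, ‖Fin.tail u i‖) := by
            have := mul_le_mul_of_nonneg_left (hSle 0) (show (0:ℝ) ≤ 1/2 * C by positivity)
            exact mul_le_mul_of_nonneg_right (by linarith) (by positivity)
        _ = 1/2 * C * S * ∏ i : Fin (k+1), ‖u i‖ := by rw [hprod]
    -- step 2 : the recursive call
    set Ω' : Set X := {y | y ∈ Ω ∧ y + v0 ∈ Ω} with hΩ'
    set g : X → Y := fun y => f (y + v0) - f y with hg
    have hC' : ∀ (W : Fin (k+1) → X) (y : X),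
        (∀ α : Fin (k+1) → Bool, y + ∑ i, (if α i then W i else 0) ∈ Ω') →
        ‖fdiff W g y‖ ≤ (C * ‖v0‖) * ∏ i, ‖W i‖ := by
      intro W y hy
      rw [hg, fdiff_shift_sub]
      refine le_trans (hC (Fin.cons v0 W) y ?_) ?_
      · intro β
        have h := hy (fun i => β i.succ)
        rw [Fin.sum_univ_succ]
        simp only [Fin.cons_zero, Fin.cons_succ]
        rcases Bool.eq_false_or_eq_true (β 0) with h0 | h0
        · rw [h0, if_pos rfl]
          have heq : y + ((v0 : X) + ∑ i : Fin (k+1), if β i.succ then W i else 0)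
              = (y + ∑ i : Fin (k+1), if β i.succ then W i else 0) + v0 := by
            rw [add_comm v0, ← add_assoc]
          rw [heq]
          exact h.2
        · rw [h0, if_neg (by simp), zero_add]
          exact h.1
      · rw [Fin.prod_univ_succ]
        simp only [Fin.cons_zero, Fin.cons_succ]
        exact le_of_eq (by ring)
    have hmem' : ∀ t ∈ Set.Icc (0 : Fin k → ℝ) 1,
        x + ∑ i, t i • Fin.tail u i ∈ Ω' := by
      intro t ht
      have hts : ∀ c : ℝ, 0 ≤ c → c ≤ 1 →
          (Fin.cons c t : Fin (k+1) → ℝ) ∈ Set.Icc (0 : Fin (k+1) → ℝ) 1 := by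
        intro c h0 h1'
        constructor
        · intro i
          refine Fin.cases ?_ (fun j => ?_) i
          · show (0:ℝ) ≤ (Fin.cons c t : Fin (k+1) → ℝ) 0
            rw [Fin.cons_zero]; exact h0
          · show (0:ℝ) ≤ (Fin.cons c t : Fin (k+1) → ℝ) j.succ
            rw [Fin.cons_succ]; exact ht.1 j
        · intro i
          refine Fin.cases ?_ (fun j => ?_) i
          · show (Fin.cons c t : Fin (k+1) → ℝ) 0 ≤ 1
            rw [Fin.cons_zero]; exact h1'
          · show (Fin.cons c t : Fin (k+1) → ℝ) j.succ ≤ 1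
            rw [Fin.cons_succ]; exact ht.2 j
      constructor
      · have h := hpar (Fin.cons 0 t) (hts 0 le_rfl zero_le_one)
        rw [Fin.sum_univ_succ] at h
        simp only [Fin.cons_zero, Fin.cons_succ, zero_smul, zero_add] at h
        exact h
      · have hinv1 : ((n 0 : ℝ))⁻¹ ≤ 1 := by
          rw [inv_le_one_iff₀]
          right
          exact_mod_cast hn 0
        have h := hpar (Fin.cons ((n 0 : ℝ))⁻¹ t) (hts _ (by positivity) hinv1)
        rw [Fin.sum_univ_succ] at h
        simp only [Fin.cons_zero, Fin.cons_succ] at h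
        have heq : x + ((n 0 : ℝ)⁻¹ • u 0 + ∑ i : Fin k, t i • u i.succ)
            = (x + ∑ i : Fin k, t i • Fin.tail u i) + v0 := by
          rw [hv0, add_comm ((n 0 : ℝ)⁻¹ • u 0), ← add_assoc]
          rfl
        rw [heq] at h
        exact h
    have ihb := ih Ω' g (C * ‖v0‖) (mul_nonneg hC0 (norm_nonneg _)) hC'
      (Fin.tail n) (fun i => hn i.succ) (Fin.tail u) x hmem'
    rw [hg, fdiff_shift_sub, fdiff_shift_sub] at ihb
    -- rewrite the target in terms of the cons pieces
    have econs : (fun i : Fin (k+1) => ((n i : ℝ))⁻¹ • u i)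
        = Fin.cons v0 (fun i : Fin k => ((Fin.tail n i : ℝ))⁻¹ • Fin.tail u i) := by
      funext i
      refine Fin.cases ?_ (fun j => ?_) i
      · rw [Fin.cons_zero, hv0]
      · rw [Fin.cons_succ]; rfl
    have eprod : (∏ i : Fin (k+1), (n i : ℝ))
        = (n 0 : ℝ) * ∏ i : Fin k, (Fin.tail n i : ℝ) := by
      rw [Fin.prod_univ_succ]; rfl
    have edecomp : fdiff u f x - (∏ i : Fin (k+1), (n i : ℝ)) •
          fdiff (fun i : Fin (k+1) => ((n i : ℝ))⁻¹ • u i) f x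
        = (fdiff u f x - (n 0 : ℝ) • fdiff (Fin.cons v0 (Fin.tail u)) f x)
          + (n 0 : ℝ) • (fdiff (Fin.cons v0 (Fin.tail u)) f x
              - (∏ i : Fin k, (Fin.tail n i : ℝ)) •
                fdiff (Fin.cons v0 (fun i : Fin k => ((Fin.tail n i : ℝ))⁻¹ • Fin.tail u i)) f x) := by
      rw [econs, eprod, mul_smul, smul_sub]
      abel
    rw [edecomp]
    refine le_trans (norm_add_le _ _) ?_
    rw [norm_smul, Real.norm_eq_abs, abs_of_pos hn0]
    have hS'le : (⨆ i : Fin k, ‖Fin.tail u i‖) ≤ S := by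
      rcases isEmpty_or_nonempty (Fin k) with hk | hk
      · rw [Real.iSup_of_isEmpty]; exact hS0
      · exact ciSup_le fun i => hSle i.succ
    have hS'0 : 0 ≤ ⨆ i : Fin k, ‖Fin.tail u i‖ := by
      rcases isEmpty_or_nonempty (Fin k) with hk | hk
      · rw [Real.iSup_of_isEmpty]
      · exact le_trans (norm_nonneg (Fin.tail u (Classical.arbitrary _)))
          (le_ciSup (f := fun i : Fin k => ‖Fin.tail u i‖)
            (Set.Finite.bddAbove (Set.finite_range _)) (Classical.arbitrary _))
    have step2 : (n 0 : ℝ) * ‖fdiff (Fin.cons v0 (Fin.tail u)) f x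
          - (∏ i : Fin k, (Fin.tail n i : ℝ)) •
            fdiff (Fin.cons v0 (fun i : Fin k => ((Fin.tail n i : ℝ))⁻¹ • Fin.tail u i)) f x‖
        ≤ (k/2 : ℝ) * C * S * ∏ i : Fin (k+1), ‖u i‖ := by
      refine le_trans (mul_le_mul_of_nonneg_left ihb (le_of_lt hn0)) ?_
      have e2 : (n 0 : ℝ) * ((k/2 : ℝ) * (C * ‖v0‖) * (⨆ i : Fin k, ‖Fin.tail u i‖)
            * ∏ i : Fin k, ‖Fin.tail u i‖)
          = (k/2 : ℝ) * C * (⨆ i : Fin k, ‖Fin.tail u i‖) * (‖u 0‖ * ∏ i : Fin k, ‖Fin.tail u i‖) := by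
        rw [← h1]; ring
      rw [e2, hprod]
      have : (k/2 : ℝ) * C * (⨆ i : Fin k, ‖Fin.tail u i‖) ≤ (k/2 : ℝ) * C * S :=
        mul_le_mul_of_nonneg_left hS'le (by positivity)
      exact mul_le_mul_of_nonneg_right this (by rw [← hprod]; positivity)
    refine le_trans (add_le_add key1 step2) ?_
    have hPn : (0:ℝ) ≤ ∏ i : Fin (k+1), ‖u i‖ := Finset.prod_nonneg fun i _ => norm_nonneg _
    have hcast : ((k+1 : ℕ) : ℝ) = (k : ℝ) + 1 := by push_cast; ring
    rw [hcast]
    nlinarith [mul_nonneg (mul_nonneg hC0 hS0) hPn]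

end Aux

theorem fdiff_refinement_bound {X Y : Type*}
    [NormedAddCommGroup X] [NormedSpace ℝ X] [NormedAddCommGroup Y] [NormedSpace ℝ Y]
    [CompleteSpace Y] (Ω : Set X) (hΩ : IsOpen Ω) (hconv : Convex ℝ Ω)
    {k : ℕ} (f : X → Y) (hf : ContinuousOn f Ω) (C : ℝ)
    (hC : ∀ (v : Fin (k + 1) → X) (y : X),
      (∀ α : Fin (k + 1) → Bool, y + ∑ i, (if α i then v i else 0) ∈ Ω) →
      ‖fdiff v f y‖ ≤ C * ∏ i, ‖v i‖)
    (n : Fin k → ℕ) (hn : ∀ i, 0 < n i) (u : Fin k → X) (x : X)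
    (hpar : ∀ t ∈ Set.Icc (0 : Fin k → ℝ) 1, x + ∑ i, t i • u i ∈ Ω) :
    ‖fdiff u f x -
        (∏ i, (n i : ℝ)) • fdiff (fun i => ((n i : ℝ))⁻¹ • u i) f x‖ ≤
      (k / 2 : ℝ) * C * (⨆ i, ‖u i‖) * ∏ i, ‖u i‖ := by
  rcases le_or_gt 0 C with hC0 | hC0
  · exact fdiff_aux k Ω f C hC0 hC n hn u x hpar
  · by_cases hz : ∃ i, u i = 0
    · obtain ⟨i, hi⟩ := hz
      have h1 : fdiff u f x = 0 := fdiff_zero_coord u i hi f x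
      have h2 : fdiff (fun j => ((n j : ℝ))⁻¹ • u j) f x = 0 :=
        fdiff_zero_coord _ i (by rw [hi, smul_zero]) f x
      have h3 : (∏ j, ‖u j‖) = 0 :=
        Finset.prod_eq_zero (Finset.mem_univ i) (by rw [hi, norm_zero])
      rw [h1, h2, h3, smul_zero, sub_zero, norm_zero, mul_zero]
    · push_neg at hz
      cases k with
      | zero =>
        simp [fdiff]
      | succ k =>
        exfalso
        have hx : x ∈ Ω := by
          have h := hpar 0 ⟨le_rfl, fun i => zero_le_one⟩
          simpa using h
        obtain ⟨ε, hε, hball⟩ := Metric.isOpen_iff.mp hΩ x hx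
        have hu0 : u 0 ≠ 0 := hz 0
        have hu0n : 0 < ‖u 0‖ := norm_pos_iff.mpr hu0
        set δ : ℝ := ε / (((k:ℝ) + 3) * ‖u 0‖) with hδ
        have hδ0 : 0 < δ := by positivity
        set w : X := δ • u 0 with hw
        have hwn : ‖w‖ = ε / ((k:ℝ) + 3) := by
          rw [hw, norm_smul, Real.norm_eq_abs, abs_of_pos hδ0, hδ]
          field_simp
        have hw0 : 0 < ‖w‖ := by rw [hwn]; positivity
        have hmem : ∀ α : Fin (k+1+1) → Bool,
            x + ∑ i, (if α i then (fun _ : Fin (k+1+1) => w) i else 0) ∈ Ω := by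
          intro α
          apply hball
          rw [Metric.mem_ball, dist_eq_norm, add_sub_cancel_left]
          calc ‖∑ i : Fin (k+1+1), if α i then w else 0‖
              ≤ ∑ i : Fin (k+1+1), ‖if α i then w else 0‖ := norm_sum_le _ _
            _ ≤ ∑ _i : Fin (k+1+1), ‖w‖ := Finset.sum_le_sum (fun i _ => by
                split
                · exact le_rfl
                · rw [norm_zero]; exact le_of_lt hw0)
            _ = ((k:ℝ)+2) * ‖w‖ := by
                rw [Finset.sum_const, Finset.card_univ, Fintype.card_fin, nsmul_eq_mul]
                push_cast; ring
            _ = ((k:ℝ)+2) * (ε / ((k:ℝ)+3)) := by rw [hwn]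
            _ < ε := by
                rw [mul_div_assoc']
                rw [div_lt_iff₀ (by positivity)]
                nlinarith
        have hb := hC (fun _ => w) x hmem
        have hp : (0:ℝ) < ∏ i : Fin (k+1+1), ‖(fun _ : Fin (k+1+1) => w) i‖ :=
          Finset.prod_pos fun i _ => hw0
        nlinarith [norm_nonneg (fdiff (fun _ : Fin (k+1+1) => w) f x),
          mul_neg_of_neg_of_pos hC0 hp]
end
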